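/- arXiv:2412.20969 — 4 statements merged into one kernel-verified Lean document; each statement's English description precedes it below -/
import Mathlib

section
/- Let θ : [0,∞) × [0,∞) → [0,∞) be concave and positively 1-homogeneous (θ(λs, λt) = λ·θ(s,t) for all λ > 0). Define A : ℝ × [0,∞) × [0,∞) → [0,∞] by A(v,r,s) := v²/(2θ(r,s)) if θ(r,s) > 0, A(v,r,s) := 0 if v = 0 and θ(r,s) = 0, and A(v,r,s) := ∞ otherwise. Then A is jointly convex as an extended-real-valued function on ℝ × [0,∞) × [0,∞), and positively 1-homogeneous: A(λv, λr, λs) = λ·A(v,r,s) for all λ > 0. -/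
open scoped ENNReal Classical

/-- The integrand `A(v,r,s)` of the nonlocal action functional, built from an
interpolation function `θ`: `A(v,r,s) = v²/(2θ(r,s))` if `θ(r,s) > 0`, `0` if
`v = 0` and `θ(r,s) = 0`, and `∞` otherwise. -/
noncomputable def Afun (θ : ℝ → ℝ → ℝ) (v r s : ℝ) : ℝ≥0∞ :=
  if 0 < θ r s then ENNReal.ofReal (v ^ 2 / (2 * θ r s))
  else if v = 0 ∧ θ r s = 0 then 0
  else ⊤

/-! `A(v,r,s) = Φ(v, θ(r,s))`, where `Φ(v,u) = v²/(2u)` is the perspective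
of `v ↦ v²/2`. Being a perspective, `Φ` is subadditive and positively 1-homogeneous, hence jointly
convex; it is also nonincreasing in `u`. Concavity of `θ` then gives
`A(v_t, r_t, s_t) = Φ(v_t, θ(r_t, s_t)) ≤ Φ(v_t, tθ(r₁,s₁) + (1-t)θ(r₂,s₂))`, and convexity of `Φ`
finishes. Homogeneity of `A` is that of `Φ` composed with that of `θ`. -/

noncomputable def halfSqPerspective (v u : ℝ) : ℝ≥0∞ :=
  if 0 < u then ENNReal.ofReal (v ^ 2 / (2 * u))
  else if v = 0 ∧ u = 0 then 0
  else ⊤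

namespace halfSqPerspective

lemma of_pos {u : ℝ} (v : ℝ) (hu : 0 < u) :
    halfSqPerspective v u = ENNReal.ofReal (v ^ 2 / (2 * u)) := if_pos hu

@[simp]
lemma zero_zero : halfSqPerspective 0 0 = 0 := by simp [halfSqPerspective]

lemma zero_left {u : ℝ} (hu : 0 ≤ u) : halfSqPerspective 0 u = 0 := by
  rcases hu.lt_or_eq with hu | rfl
  · simp [of_pos 0 hu]
  · exact zero_zero

lemma ne_top_iff {v u : ℝ} : halfSqPerspective v u ≠ ⊤ ↔ 0 < u ∨ (v = 0 ∧ u = 0) := by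
  unfold halfSqPerspective
  split_ifs <;> simp [*]

lemma antitone (v : ℝ) : Antitone (halfSqPerspective v) := by
  intro u u' huu'
  by_cases hfin : halfSqPerspective v u = ⊤
  · exact hfin ▸ le_top
  rcases ne_top_iff.mp hfin with hu | ⟨rfl, rfl⟩
  · rw [of_pos v hu, of_pos v (hu.trans_le huu')]
    gcongr
  · rw [zero_left huu', zero_zero]

lemma homogeneous {c : ℝ} (hc : 0 ≤ c) (v u : ℝ) :
    halfSqPerspective (c * v) (c * u) = ENNReal.ofReal c * halfSqPerspective v u := by
  obtain rfl | hc := hc.eq_or_lt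
  · simp
  unfold halfSqPerspective
  simp only [mul_pos_iff_of_pos_left hc, mul_eq_zero, hc.ne', false_or]
  split_ifs
  · rw [← ENNReal.ofReal_mul hc.le]
    congr 1
    field_simp
  · simp
  · exact (ENNReal.mul_top (ENNReal.ofReal_pos.mpr hc).ne').symm

lemma add_le (v₁ u₁ v₂ u₂ : ℝ) :
    halfSqPerspective (v₁ + v₂) (u₁ + u₂) ≤ halfSqPerspective v₁ u₁ + halfSqPerspective v₂ u₂ := by
  by_cases hfin₁ : halfSqPerspective v₁ u₁ = ⊤
  · simp [hfin₁]
  by_cases hfin₂ : halfSqPerspective v₂ u₂ = ⊤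
  · simp [hfin₂]
  rcases ne_top_iff.mp hfin₁ with hu₁ | ⟨rfl, rfl⟩
  · rcases ne_top_iff.mp hfin₂ with hu₂ | ⟨rfl, rfl⟩
    · rw [of_pos _ (add_pos hu₁ hu₂), of_pos _ hu₁, of_pos _ hu₂,
        ← ENNReal.ofReal_add (by positivity) (by positivity)]
      apply ENNReal.ofReal_le_ofReal
      have titu := Finset.sq_sum_div_le_sum_sq_div Finset.univ ![v₁, v₂] (g := ![u₁, u₂])
        (by simp [Fin.forall_fin_two, hu₁, hu₂])
      simp only [Fin.sum_univ_two, Matrix.cons_val_zero, Matrix.cons_val_one] at titu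
      simp only [div_mul_eq_div_div_swap]
      linarith [div_le_div_of_nonneg_right titu zero_le_two, add_div (v₁ ^ 2 / u₁) (v₂ ^ 2 / u₂) 2]
    · simp
  · simp

lemma convex_combination_le (v₁ u₁ v₂ u₂ : ℝ) {t : ℝ} (ht : t ∈ Set.Icc (0 : ℝ) 1) :
    halfSqPerspective (t * v₁ + (1 - t) * v₂) (t * u₁ + (1 - t) * u₂)
      ≤ ENNReal.ofReal t * halfSqPerspective v₁ u₁
        + ENNReal.ofReal (1 - t) * halfSqPerspective v₂ u₂ := by
  rw [← homogeneous ht.1, ← homogeneous (sub_nonneg.mpr ht.2)]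
  exact add_le _ _ _ _

end halfSqPerspective

theorem Afun_convex_homogeneous_general (θ : ℝ → ℝ → ℝ)
    (hconc : ConcaveOn ℝ (Set.Ici (0:ℝ) ×ˢ Set.Ici (0:ℝ)) (fun p : ℝ × ℝ => θ p.1 p.2))
    (hhom : ∀ lam r s : ℝ, 0 < lam → 0 ≤ r → 0 ≤ s → θ (lam * r) (lam * s) = lam * θ r s) :
    (∀ v₁ r₁ s₁ v₂ r₂ s₂ t : ℝ, 0 ≤ r₁ → 0 ≤ s₁ → 0 ≤ r₂ → 0 ≤ s₂ →
        t ∈ Set.Icc (0:ℝ) 1 →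
        Afun θ (t * v₁ + (1 - t) * v₂) (t * r₁ + (1 - t) * r₂) (t * s₁ + (1 - t) * s₂)
          ≤ ENNReal.ofReal t * Afun θ v₁ r₁ s₁ + ENNReal.ofReal (1 - t) * Afun θ v₂ r₂ s₂)
    ∧ (∀ lam v r s : ℝ, 0 < lam → 0 ≤ r → 0 ≤ s →
        Afun θ (lam * v) (lam * r) (lam * s) = ENNReal.ofReal lam * Afun θ v r s) := by
  have hA : ∀ v r s, Afun θ v r s = halfSqPerspective v (θ r s) := fun _ _ _ => rfl
  refine ⟨fun v₁ r₁ s₁ v₂ r₂ s₂ t hr₁ hs₁ hr₂ hs₂ ht => ?_,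
    fun lam v r s hlam hr hs => ?_⟩
  · have hθ : t * θ r₁ s₁ + (1 - t) * θ r₂ s₂
        ≤ θ (t * r₁ + (1 - t) * r₂) (t * s₁ + (1 - t) * s₂) :=
      hconc.2 (x := (r₁, s₁)) (y := (r₂, s₂)) ⟨hr₁, hs₁⟩ ⟨hr₂, hs₂⟩ ht.1 (sub_nonneg.mpr ht.2)
        (by ring)
    simp only [hA]
    exact (halfSqPerspective.antitone _ hθ).trans
      (halfSqPerspective.convex_combination_le _ _ _ _ ht)
  · rw [hA, hA, hhom lam r s hlam hr hs, halfSqPerspective.homogeneous hlam.le]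

/-- **Joint convexity and positive 1-homogeneity of the action integrand.**
If `θ : [0,∞)² → [0,∞)` is concave and positively 1-homogeneous, then the
extended-real-valued integrand `A(v,r,s)` is jointly convex on `ℝ × [0,∞) × [0,∞)`
and positively 1-homogeneous: `A(λv, λr, λs) = λ·A(v,r,s)` for all `λ > 0`. -/
theorem Afun_convex_homogeneous (θ : ℝ → ℝ → ℝ)
    (hnonneg : ∀ r s : ℝ, 0 ≤ r → 0 ≤ s → 0 ≤ θ r s)
    (hconc : ConcaveOn ℝ (Set.Ici (0:ℝ) ×ˢ Set.Ici (0:ℝ)) (fun p : ℝ × ℝ => θ p.1 p.2))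
    (hhom : ∀ lam r s : ℝ, 0 < lam → 0 ≤ r → 0 ≤ s → θ (lam * r) (lam * s) = lam * θ r s) :
    (∀ v₁ r₁ s₁ v₂ r₂ s₂ t : ℝ, 0 ≤ r₁ → 0 ≤ s₁ → 0 ≤ r₂ → 0 ≤ s₂ →
        t ∈ Set.Icc (0:ℝ) 1 →
        Afun θ (t * v₁ + (1 - t) * v₂) (t * r₁ + (1 - t) * r₂) (t * s₁ + (1 - t) * s₂)
          ≤ ENNReal.ofReal t * Afun θ v₁ r₁ s₁ + ENNReal.ofReal (1 - t) * Afun θ v₂ r₂ s₂)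
    ∧ (∀ lam v r s : ℝ, 0 < lam → 0 ≤ r → 0 ≤ s →
        Afun θ (lam * v) (lam * r) (lam * s) = ENNReal.ofReal lam * Afun θ v r s) :=
  Afun_convex_homogeneous_general θ hconc hhom
end

section
/- The function F : [0,∞)² → [0,∞] defined by F(r,s) := (r−s)(log r − log s) for r,s > 0, F(0,0) := 0, and F(r,0) = F(0,r) := ∞ for r > 0, is jointly convex on [0,∞)² and positively 1-homogeneous: F(λr, λs) = λ·F(r,s) for all λ > 0 and r,s ≥ 0 (with λ·∞ = ∞). -/
open scoped ENNReal

/-- The integrand of the nonlocal relative Fisher information: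
`F(r,s) = (r−s)(log r − log s)` for `r,s > 0`, `F(0,0) = 0`, and
`F(r,0) = F(0,r) = ∞` for `r > 0`. -/
noncomputable def Fent (r s : ℝ) : ℝ≥0∞ :=
  if 0 < r ∧ 0 < s then ENNReal.ofReal ((r - s) * (Real.log r - Real.log s))
  else if r = 0 ∧ s = 0 then 0
  else ⊤

/-!
On the open quadrant `(r - s)(log r - log s) = r log (r/s) + s log (s/r)` is a sum of two
perspectives of the convex function `x ↦ x log x`, so it is 1-homogeneous and subadditive
(the log-sum inequality). The extension by `0` at the origin and `∞` on the rest of the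
boundary keeps both properties, and for a 1-homogeneous function subadditivity is convexity.
-/

open Real

lemma ConvexOn.perspective_add_le {s : Set ℝ} {f : ℝ → ℝ} (hf : ConvexOn ℝ s f)
    {x y u v : ℝ} (hx : x / u ∈ s) (hy : y / v ∈ s) (hu : 0 < u) (hv : 0 < v) :
    (u + v) * f ((x + y) / (u + v)) ≤ u * f (x / u) + v * f (y / v) := by
  have huv : 0 < u + v := add_pos hu hv
  have hcomb : (u / (u + v)) • (x / u) + (v / (u + v)) • (y / v) = (x + y) / (u + v) := by
    simp only [smul_eq_mul]
    field_simp
  have hconv := hf.2 hx hy (div_pos hu huv).le (div_pos hv huv).le (by field_simp)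
  rw [hcomb, smul_eq_mul, smul_eq_mul] at hconv
  calc (u + v) * f ((x + y) / (u + v))
      ≤ (u + v) * (u / (u + v) * f (x / u) + v / (u + v) * f (y / v)) :=
        mul_le_mul_of_nonneg_left hconv huv.le
    _ = u * f (x / u) + v * f (y / v) := by field_simp

lemma add_mul_log_div_add_le {x y u v : ℝ} (hx : 0 ≤ x) (hy : 0 ≤ y) (hu : 0 < u) (hv : 0 < v) :
    (x + y) * log ((x + y) / (u + v)) ≤ x * log (x / u) + y * log (y / v) := by
  have key := convexOn_mul_log.perspective_add_le (Set.mem_Ici.2 (div_nonneg hx hu.le))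
    (Set.mem_Ici.2 (div_nonneg hy hv.le)) hu hv
  have hu' := hu.ne'
  have hv' := hv.ne'
  have huv := (add_pos hu hv).ne'
  convert key using 1 <;> field_simp

lemma sub_mul_log_sub_log_eq {r s : ℝ} (hr : 0 < r) (hs : 0 < s) :
    (r - s) * (log r - log s) = r * log (r / s) + s * log (s / r) := by
  rw [log_div hr.ne' hs.ne', log_div hs.ne' hr.ne']
  ring

lemma sub_mul_log_sub_log_add_le {r₁ s₁ r₂ s₂ : ℝ}
    (hr₁ : 0 < r₁) (hs₁ : 0 < s₁) (hr₂ : 0 < r₂) (hs₂ : 0 < s₂) :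
    (r₁ + r₂ - (s₁ + s₂)) * (log (r₁ + r₂) - log (s₁ + s₂))
      ≤ (r₁ - s₁) * (log r₁ - log s₁) + (r₂ - s₂) * (log r₂ - log s₂) := by
  rw [sub_mul_log_sub_log_eq hr₁ hs₁, sub_mul_log_sub_log_eq hr₂ hs₂,
    sub_mul_log_sub_log_eq (add_pos hr₁ hr₂) (add_pos hs₁ hs₂)]
  linarith [add_mul_log_div_add_le hr₁.le hr₂.le hs₁ hs₂,
    add_mul_log_div_add_le hs₁.le hs₂.le hr₁ hr₂]

lemma Fent_of_pos {r s : ℝ} (hr : 0 < r) (hs : 0 < s) :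
    Fent r s = ENNReal.ofReal ((r - s) * (log r - log s)) :=
  if_pos ⟨hr, hs⟩

@[simp]
lemma Fent_zero_zero : Fent 0 0 = 0 := by
  simp [Fent]

lemma Fent_ne_top_iff {r s : ℝ} : Fent r s ≠ ⊤ ↔ (0 < r ∧ 0 < s) ∨ (r = 0 ∧ s = 0) := by
  unfold Fent
  split_ifs <;> simp_all

lemma Fent_mul_left {lam : ℝ} (hlam : 0 ≤ lam) (r s : ℝ) :
    Fent (lam * r) (lam * s) = ENNReal.ofReal lam * Fent r s := by
  rcases hlam.eq_or_lt with rfl | hlam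
  · simp
  simp only [Fent, mul_pos_iff_of_pos_left hlam, mul_eq_zero, hlam.ne', false_or]
  split_ifs with hpos
  · rw [← ENNReal.ofReal_mul hlam.le, log_mul hlam.ne' hpos.1.ne', log_mul hlam.ne' hpos.2.ne']
    ring_nf
  · simp
  · exact (ENNReal.mul_top (by simpa using hlam)).symm

lemma Fent_add_le (r₁ s₁ r₂ s₂ : ℝ) :
    Fent (r₁ + r₂) (s₁ + s₂) ≤ Fent r₁ s₁ + Fent r₂ s₂ := by
  by_cases h₁ : Fent r₁ s₁ = ⊤
  · simp [h₁]
  by_cases h₂ : Fent r₂ s₂ = ⊤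
  · simp [h₂]
  rcases Fent_ne_top_iff.1 h₁ with ⟨hr₁, hs₁⟩ | ⟨rfl, rfl⟩
  swap; · simp
  rcases Fent_ne_top_iff.1 h₂ with ⟨hr₂, hs₂⟩ | ⟨rfl, rfl⟩
  swap; · simp
  rw [Fent_of_pos hr₁ hs₁, Fent_of_pos hr₂ hs₂, Fent_of_pos (add_pos hr₁ hr₂) (add_pos hs₁ hs₂)]
  exact (ENNReal.ofReal_le_ofReal (sub_mul_log_sub_log_add_le hr₁ hs₁ hr₂ hs₂)).trans
    ENNReal.ofReal_add_le

/-- **Joint convexity and positive 1-homogeneity of the Fisher information integrand.**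
The function `F(r,s) = (r−s)(log r − log s)` (with `F(0,0)=0`, `F(r,0)=F(0,r)=∞` for `r>0`)
is jointly convex on `[0,∞)²` and positively 1-homogeneous:
`F(λr, λs) = λ·F(r,s)` for all `λ > 0` and `r,s ≥ 0`. -/
theorem Fent_convex_homogeneous :
    (∀ r₁ s₁ r₂ s₂ t : ℝ, 0 ≤ r₁ → 0 ≤ s₁ → 0 ≤ r₂ → 0 ≤ s₂ →
        t ∈ Set.Icc (0:ℝ) 1 →
        Fent (t * r₁ + (1 - t) * r₂) (t * s₁ + (1 - t) * s₂)
          ≤ ENNReal.ofReal t * Fent r₁ s₁ + ENNReal.ofReal (1 - t) * Fent r₂ s₂)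
    ∧ (∀ lam r s : ℝ, 0 < lam → 0 ≤ r → 0 ≤ s →
        Fent (lam * r) (lam * s) = ENNReal.ofReal lam * Fent r s) := by
  refine ⟨fun r₁ s₁ r₂ s₂ t _ _ _ _ ht => ?_, fun lam r s hlam _ _ => Fent_mul_left hlam.le r s⟩
  calc Fent (t * r₁ + (1 - t) * r₂) (t * s₁ + (1 - t) * s₂)
      ≤ Fent (t * r₁) (t * s₁) + Fent ((1 - t) * r₂) ((1 - t) * s₂) := Fent_add_le _ _ _ _
    _ = ENNReal.ofReal t * Fent r₁ s₁ + ENNReal.ofReal (1 - t) * Fent r₂ s₂ := by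
      rw [Fent_mul_left ht.1, Fent_mul_left (sub_nonneg.2 ht.2)]
end

section
/- Let π be a probability measure on a measurable space X and let μ be a probability measure on X with μ ≪ π and density f = dμ/dπ. Then H(μ∣π) ≤ (1/2) ∬_{X×X} F(f(x), f(y)) dπ(x) dπ(y), where both sides are interpreted as values in [0,∞]. -/
open MeasureTheory
open scoped ENNReal Classical

/-- Relative entropy `H(μ∣ν) = ∫ (g log g − g + 1) dν ∈ [0,∞]` with `g = dμ/dν`,
if `μ ≪ ν`, and `H(μ∣ν) = ∞` otherwise. For probability measures `μ ≪ ν` this equals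
`∫ g log g dν`. -/
noncomputable def relEnt {X : Type*} [MeasurableSpace X] (μ ν : Measure X) : ℝ≥0∞ :=
  if μ ≪ ν then
    ∫⁻ x, ENNReal.ofReal ((μ.rnDeriv ν x).toReal * Real.log (μ.rnDeriv ν x).toReal
        - (μ.rnDeriv ν x).toReal + 1) ∂ν
  else ⊤

/-!
For the entropy integrand `φ(r) = r log r − r + 1`, the bound `−log t ≥ 1 − t` gives, for `r, s ≥ 0`,
`φ(r) + φ(s) ≤ F(r, s) + 2 (1 − r)(1 − s)` (the conventions of `Fent` cover `r s = 0`).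
Integrating in `x` and `y` against `π`, with `r = f(x)`, `s = f(y)`, the correction term
integrates to `2 (1 − ∫ f dπ)² = 0`, so `2 H(μ∣π) ≤ ∬ F`. To stay in `[0, ∞]`, the correction is
written as `2 + 2 r s − 2 r − 2 s` and its negative part moved to the left-hand side.
-/

lemma mul_log_sub_add_one_nonneg {r : ℝ} (hr : 0 ≤ r) : 0 ≤ r * Real.log r - r + 1 := by
  linarith [Real.self_sub_one_le_mul_log hr]

lemma entropy_add_entropy_le_of_pos {r s : ℝ} (hr : 0 < r) (hs : 0 < s) :
    (r * Real.log r - r + 1 + 2 * r) + (s * Real.log s - s + 1 + 2 * s)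
      ≤ (r - s) * (Real.log r - Real.log s) + 2 * (1 + r * s) := by
  have hr' := mul_nonneg hr.le (sub_nonneg.2 (Real.log_le_sub_one_of_pos hs))
  have hs' := mul_nonneg hs.le (sub_nonneg.2 (Real.log_le_sub_one_of_pos hr))
  linarith

lemma ofReal_entropy_add_entropy_le_Fent {r s : ℝ} (hr : 0 ≤ r) (hs : 0 ≤ s) :
    (ENNReal.ofReal (r * Real.log r - r + 1) + 2 * ENNReal.ofReal r)
      + (ENNReal.ofReal (s * Real.log s - s + 1) + 2 * ENNReal.ofReal s)
      ≤ Fent r s + 2 * (1 + ENNReal.ofReal r * ENNReal.ofReal s) := by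
  have ofReal_entropy_add {t : ℝ} (ht : 0 ≤ t) : ENNReal.ofReal (t * Real.log t - t + 1)
      + 2 * ENNReal.ofReal t = ENNReal.ofReal (t * Real.log t - t + 1 + 2 * t) := by
    rw [ENNReal.ofReal_add (mul_log_sub_add_one_nonneg ht) (by positivity),
      ENNReal.ofReal_mul zero_le_two, ENNReal.ofReal_ofNat]
  unfold Fent
  split_ifs with hpos hzero
  · calc _ = ENNReal.ofReal
            ((r * Real.log r - r + 1 + 2 * r) + (s * Real.log s - s + 1 + 2 * s)) := by
          rw [ofReal_entropy_add hr, ofReal_entropy_add hs,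
            ← ENNReal.ofReal_add (by linarith [mul_log_sub_add_one_nonneg hr])
              (by linarith [mul_log_sub_add_one_nonneg hs])]
      _ ≤ ENNReal.ofReal ((r - s) * (Real.log r - Real.log s) + 2 * (1 + r * s)) :=
          ENNReal.ofReal_le_ofReal (entropy_add_entropy_le_of_pos hpos.1 hpos.2)
      _ ≤ _ := ENNReal.ofReal_add_le
      _ = _ := by
          rw [ENNReal.ofReal_mul zero_le_two, ENNReal.ofReal_add zero_le_one (by positivity),
            ENNReal.ofReal_mul hr, ENNReal.ofReal_one, ENNReal.ofReal_ofNat]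
  · obtain ⟨rfl, rfl⟩ := hzero
    norm_num
  · simp

section DoubleIntegral

variable {X : Type*} [MeasurableSpace X] {π : Measure X} [IsProbabilityMeasure π]

lemma lintegral_lintegral_add_eq_two_mul (v : X → ℝ≥0∞) :
    ∫⁻ x, ∫⁻ y, (v x + v y) ∂π ∂π = 2 * ∫⁻ x, v x ∂π := by
  simp only [lintegral_add_left measurable_const, lintegral_const, measure_univ, mul_one]
  rw [lintegral_add_right _ measurable_const, lintegral_const, measure_univ, mul_one, two_mul]

lemma lintegral_lintegral_add_two_mul_one_add_mul {a : X → ℝ≥0∞} (ha : Measurable a)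
    (ha1 : ∫⁻ x, a x ∂π = 1) (K : X → X → ℝ≥0∞) :
    ∫⁻ x, ∫⁻ y, (K x y + 2 * (1 + a x * a y)) ∂π ∂π = ∫⁻ x, ∫⁻ y, K x y ∂π ∂π + 4 := by
  have inner (x : X) : ∫⁻ y, 2 * (1 + a x * a y) ∂π = 2 * (1 + a x) := by
    rw [lintegral_const_mul _ (by fun_prop), lintegral_add_left measurable_const, lintegral_const,
      measure_univ, lintegral_const_mul _ ha, ha1, mul_one, mul_one]
  calc _ = ∫⁻ x, (∫⁻ y, K x y ∂π + 2 * (1 + a x)) ∂π :=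
        lintegral_congr fun x ↦ by rw [lintegral_add_right _ (by fun_prop), inner]
    _ = _ := by
        rw [lintegral_add_right _ (by fun_prop), lintegral_const_mul _ (by fun_prop),
          lintegral_add_left measurable_const, lintegral_const, measure_univ, ha1]
        norm_num

lemma lintegral_le_half_lintegral_lintegral_of_add_le {u a : X → ℝ≥0∞} {K : X → X → ℝ≥0∞}
    (ha : Measurable a) (ha1 : ∫⁻ x, a x ∂π = 1)
    (h : ∀ x y, (u x + 2 * a x) + (u y + 2 * a y) ≤ K x y + 2 * (1 + a x * a y)) :
    ∫⁻ x, u x ∂π ≤ 1 / 2 * ∫⁻ x, ∫⁻ y, K x y ∂π ∂π := by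
  have hsum : ∫⁻ x, (u x + 2 * a x) ∂π = ∫⁻ x, u x ∂π + 2 := by
    rw [lintegral_add_right _ (ha.const_mul 2), lintegral_const_mul _ ha, ha1, mul_one]
  have key : 2 * ∫⁻ x, u x ∂π + 4 ≤ ∫⁻ x, ∫⁻ y, K x y ∂π ∂π + 4 := by
    calc 2 * ∫⁻ x, u x ∂π + 4 = 2 * ∫⁻ x, (u x + 2 * a x) ∂π := by
          rw [hsum, mul_add]; norm_num
      _ = ∫⁻ x, ∫⁻ y, ((u x + 2 * a x) + (u y + 2 * a y)) ∂π ∂π :=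
          (lintegral_lintegral_add_eq_two_mul _).symm
      _ ≤ ∫⁻ x, ∫⁻ y, (K x y + 2 * (1 + a x * a y)) ∂π ∂π :=
          lintegral_mono fun x ↦ lintegral_mono fun y ↦ h x y
      _ = _ := lintegral_lintegral_add_two_mul_one_add_mul ha ha1 K
  calc ∫⁻ x, u x ∂π = 1 / 2 * (2 * ∫⁻ x, u x ∂π) := by
        rw [← mul_assoc, one_div, ENNReal.inv_mul_cancel two_ne_zero ENNReal.ofNat_ne_top, one_mul]
    _ ≤ _ := by gcongr; exact ENNReal.le_of_add_le_add_right (by norm_num) key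

end DoubleIntegral

/-- **The relative entropy is dominated by half the double integral of the Fisher
integrand.** If `μ, π` are probability measures with `μ ≪ π` and density `f = dμ/dπ`,
then `H(μ∣π) ≤ (1/2) ∬ F(f(x), f(y)) dπ(x) dπ(y)`. -/
theorem relEnt_le_half_double_integral_Fent {X : Type*} [MeasurableSpace X]
    (π μ : Measure X) [IsProbabilityMeasure π] [IsProbabilityMeasure μ]
    (hac : μ ≪ π) :
    relEnt μ π ≤ (1/2 : ℝ≥0∞) *
      ∫⁻ x, ∫⁻ y, Fent (μ.rnDeriv π x).toReal (μ.rnDeriv π y).toReal ∂π ∂π := by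
  have hmass : ∫⁻ x, ENNReal.ofReal (μ.rnDeriv π x).toReal ∂π = 1 := by
    rw [← measure_univ (μ := μ), ← Measure.lintegral_rnDeriv hac]
    refine lintegral_congr_ae ?_
    filter_upwards [Measure.rnDeriv_lt_top μ π] with x hx
    exact ENNReal.ofReal_toReal hx.ne
  rw [relEnt, if_pos hac]
  exact lintegral_le_half_lintegral_lintegral_of_add_le
    (Measure.measurable_rnDeriv μ π).ennreal_toReal.ennreal_ofReal hmass
    fun x y ↦ ofReal_entropy_add_entropy_le_Fent ENNReal.toReal_nonneg ENNReal.toReal_nonneg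
end

section
/- Let k be a standard mollifier on ℝ^d and let w : ℝ^d×ℝ^d → ℝ be locally integrable with respect to Lebesgue measure on ℝ^{2d}. Then for Lebesgue-almost every (x,y) ∈ ℝ^d×ℝ^d, the diagonal mollification ∫_{ℝ^d} w(x−z, y−z) k_δ(z) dz converges to w(x,y) as δ → 0⁺. -/
open MeasureTheory
open scoped ENNReal

open Metric Filter Function Set
open scoped Topology

/-- The rescaled mollifier `k_δ(z) = δ^{-d} k(z/δ)` on `ℝ^d`. -/
noncomputable def mollify {d : ℕ} (k : EuclideanSpace ℝ (Fin d) → ℝ) (δ : ℝ)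
    (z : EuclideanSpace ℝ (Fin d)) : ℝ :=
  (δ ^ d)⁻¹ * k (δ⁻¹ • z)

section Aux
variable {d : ℕ}
local notation "E" => EuclideanSpace ℝ (Fin d)

lemma mollify_integral (k : E → ℝ)
    (hknorm : ∫ z, k z = 1) {δ : ℝ} (hδ : 0 < δ) : ∫ z, mollify k δ z = 1 := by
  simp only [mollify]
  rw [integral_const_mul, Measure.integral_comp_smul volume k δ⁻¹,
    finrank_euclideanSpace_fin, hknorm]
  have h1 : |((δ⁻¹ : ℝ) ^ d)⁻¹| = δ ^ d := by
    rw [← inv_pow, inv_inv, abs_of_nonneg (pow_nonneg hδ.le _)]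
  simp only [h1, smul_eq_mul, mul_one]
  exact inv_mul_cancel₀ (pow_ne_zero _ hδ.ne')

lemma avg_tendsto_real {f : E → ℝ} {x₀ : E}
    (hf : LocallyIntegrable f volume)
    (hx : Tendsto (fun n : ℕ => ⨍ y in closedBall x₀ (((n : ℝ) + 1)⁻¹), ‖f y - f x₀‖)
      atTop (𝓝 0)) :
    Tendsto (fun r : ℝ => ⨍ y in closedBall x₀ r, ‖f y - f x₀‖) (𝓝[>] (0:ℝ)) (𝓝 0) := by
  set g : E → ℝ := fun y => ‖f y - f x₀‖ with hg
  have hgint : ∀ r : ℝ, IntegrableOn g (closedBall x₀ r) volume := by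
    intro r
    exact ((hf.integrableOn_isCompact (isCompact_closedBall _ _)).sub
      (integrableOn_const measure_closedBall_lt_top.ne)).norm
  have hgnn : ∀ y, 0 ≤ g y := fun y => norm_nonneg _
  set A : ℝ → ℝ := fun r => ⨍ y in closedBall x₀ r, g y with hA
  have hAnn : ∀ r, 0 ≤ A r := by
    intro r
    simp only [hA]
    rw [setAverage_eq]
    exact smul_nonneg (inv_nonneg.2 ENNReal.toReal_nonneg)
      (setIntegral_nonneg measurableSet_closedBall fun y _ => hgnn y)
  set c : ℝ := (volume (ball (0:E) 1)).toReal with hc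
  have hcpos : 0 < c := by
    refine ENNReal.toReal_pos (ne_of_gt (measure_ball_pos _ _ one_pos)) measure_ball_lt_top.ne
  have hD : ∀ r : ℝ, 0 ≤ r → (volume (closedBall x₀ r)).toReal = r ^ d * c := by
    intro r hr
    rw [Measure.addHaar_closedBall volume x₀ hr, ENNReal.toReal_mul,
      ENNReal.toReal_ofReal (pow_nonneg hr _), finrank_euclideanSpace_fin]
  -- the sequence of radii
  set m : ℝ → ℕ := fun r => ⌊r⁻¹⌋₊ with hm
  have hmt : Tendsto (fun r => m r - 1) (𝓝[>] (0:ℝ)) atTop := by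
    refine (tendsto_sub_atTop_nat 1).comp ?_
    exact (tendsto_nat_floor_atTop.comp tendsto_inv_nhdsGT_zero)
  have key : ∀ r : ℝ, 0 < r → r ≤ 1/2 → A r ≤ 2 ^ d * A ((((m r - 1 : ℕ) : ℝ) + 1)⁻¹) := by
    intro r hr hr2
    have hrinv : (2:ℝ) ≤ r⁻¹ := by
      rw [le_inv_comm₀ (by norm_num) hr]
      linarith
    have h2 : (2:ℕ) ≤ m r := Nat.le_floor (by exact_mod_cast hrinv)
    have hn1 : ((m r - 1 : ℕ) : ℝ) + 1 = (m r : ℝ) := by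
      have h : (m r - 1) + 1 = m r := by omega
      rw [← Nat.cast_one (R := ℝ), ← Nat.cast_add, h]
    rw [hn1]
    set s : ℝ := ((m r : ℝ))⁻¹ with hs
    have hmpos : (0:ℝ) < (m r : ℝ) := by exact_mod_cast (by omega : 0 < m r)
    have hspos : 0 < s := inv_pos.2 hmpos
    have hrs : r ≤ s := by
      have h1 : (m r : ℝ) ≤ r⁻¹ := Nat.floor_le (inv_nonneg.2 hr.le)
      calc r = (r⁻¹)⁻¹ := (inv_inv r).symm
        _ ≤ s := by exact inv_anti₀ hmpos h1
    have hs2 : s ≤ 2 * r := by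
      have h1 : r⁻¹ < (m r : ℝ) + 1 := Nat.lt_floor_add_one _
      have h2' : (m r : ℝ) + 1 ≤ 2 * (m r : ℝ) := by
        have : (1:ℝ) ≤ (m r : ℝ) := by exact_mod_cast (by omega : 1 ≤ m r)
        linarith
      have h3 : r⁻¹ ≤ 2 * (m r : ℝ) := le_of_lt (lt_of_lt_of_le h1 h2')
      have h4 : ((2:ℝ) * (m r : ℝ))⁻¹ ≤ r := inv_le_of_inv_le₀ hr h3
      have h5 : s = 2 * ((2:ℝ) * (m r : ℝ))⁻¹ := by
        rw [hs]
        field_simp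
      rw [h5]
      linarith [mul_le_mul_of_nonneg_left h4 (by norm_num : (0:ℝ) ≤ 2)]
    have hNmono : ∫ y in closedBall x₀ r, g y ≤ ∫ y in closedBall x₀ s, g y := by
      refine setIntegral_mono_set (hgint s) (ae_of_all _ hgnn)
        (HasSubset.Subset.eventuallyLE (closedBall_subset_closedBall hrs))
    have hNnn : (0:ℝ) ≤ ∫ y in closedBall x₀ s, g y :=
      setIntegral_nonneg measurableSet_closedBall fun y _ => hgnn y
    have e1 : A r = (r ^ d * c)⁻¹ * ∫ y in closedBall x₀ r, g y := by
      simp only [hA]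
      rw [setAverage_eq, measureReal_def, hD r hr.le, smul_eq_mul]
    have e2 : A s = (s ^ d * c)⁻¹ * ∫ y in closedBall x₀ s, g y := by
      simp only [hA]
      rw [setAverage_eq, measureReal_def, hD s hspos.le, smul_eq_mul]
    calc A r ≤ (r ^ d * c)⁻¹ * ∫ y in closedBall x₀ s, g y := by
          rw [e1]
          exact mul_le_mul_of_nonneg_left hNmono (by positivity)
      _ = (s / r) ^ d * A s := by
          rw [e2, div_pow]
          field_simp
      _ ≤ 2 ^ d * A s := by
          refine mul_le_mul_of_nonneg_right ?_ (hAnn s)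
          refine pow_le_pow_left₀ (by positivity) ?_ d
          rw [div_le_iff₀ hr]
          linarith
  have hlim : Tendsto (fun r : ℝ => 2 ^ d * A ((((m r - 1 : ℕ) : ℝ) + 1)⁻¹)) (𝓝[>] (0:ℝ))
      (𝓝 0) := by
    have := (hx.comp hmt).const_mul ((2:ℝ) ^ d)
    simpa using this
  refine squeeze_zero' (Eventually.of_forall fun r => hAnn r) ?_ hlim
  filter_upwards [Ioc_mem_nhdsGT (by norm_num : (0:ℝ) < 1/2)] with r hr
  exact key r hr.1 hr.2

lemma pointwise_mollify {k : E → ℝ} {M : ℝ} (hM : ∀ z, |k z| ≤ M)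
    (hksupp : support k ⊆ closedBall 0 1) (hknorm : ∫ z, k z = 1)
    {f : E → ℝ} (hf : LocallyIntegrable f volume) {x₀ : E}
    (hx : Tendsto (fun n : ℕ => ⨍ y in closedBall x₀ (((n : ℝ) + 1)⁻¹), ‖f y - f x₀‖)
      atTop (𝓝 0)) :
    Tendsto (fun δ : ℝ => ∫ z, f (x₀ - z) * mollify k δ z) (𝓝[>] (0:ℝ)) (𝓝 (f x₀)) := by
  have havg := avg_tendsto_real hf hx
  set c : ℝ := (volume (ball (0:E) 1)).toReal with hc
  have hcpos : 0 < c :=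
    ENNReal.toReal_pos (ne_of_gt (measure_ball_pos _ _ one_pos)) measure_ball_lt_top.ne
  have hD : ∀ r : ℝ, 0 ≤ r → (volume (closedBall x₀ r)).toReal = r ^ d * c := by
    intro r hr
    rw [Measure.addHaar_closedBall volume x₀ hr, ENNReal.toReal_mul,
      ENNReal.toReal_ofReal (pow_nonneg hr _), finrank_euclideanSpace_fin]
  have hM0 : 0 ≤ M := le_trans (abs_nonneg _) (hM 0)
  have hδpos : ∀ᶠ δ : ℝ in 𝓝[>] (0:ℝ), 0 < δ := self_mem_nhdsWithin
  have main := tendsto_integral_smul_of_tendsto_average_norm_sub (μ := volume)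
    (a := fun δ : ℝ => closedBall x₀ δ) (l := 𝓝[>] (0:ℝ)) (f := f) (c := f x₀)
    (g := fun (δ : ℝ) (y : E) => mollify k δ (x₀ - y)) (M * c) havg
    (Eventually.of_forall fun δ => hf.integrableOn_isCompact (isCompact_closedBall _ _))
    ?_ ?_ ?_
  · refine main.congr fun δ => ?_
    rw [← integral_sub_left_eq_self (fun z => f (x₀ - z) * mollify k δ z) volume x₀]
    congr 1
    ext y
    rw [sub_sub_cancel, smul_eq_mul, mul_comm]
  · -- total integral tends to 1
    refine Tendsto.congr' ?_ (tendsto_const_nhds (α := ℝ))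
    filter_upwards [hδpos] with δ hδ
    rw [integral_sub_left_eq_self (fun z => mollify k δ z) volume x₀,
      mollify_integral k hknorm hδ]
  · -- support
    filter_upwards [hδpos] with δ hδ
    intro y hy
    have hk : k (δ⁻¹ • (x₀ - y)) ≠ 0 := by
      simp only [mollify, mem_support, ne_eq, mul_eq_zero, not_or] at hy
      exact hy.2
    have h1 : δ⁻¹ • (x₀ - y) ∈ closedBall (0:E) 1 := hksupp hk
    rw [mem_closedBall, dist_zero_right, norm_smul, norm_inv, Real.norm_eq_abs,
      abs_of_pos hδ] at h1
    rw [mem_closedBall, dist_eq_norm, norm_sub_rev]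
    calc ‖x₀ - y‖ = δ * (δ⁻¹ * ‖x₀ - y‖) := by field_simp
      _ ≤ δ * 1 := mul_le_mul_of_nonneg_left h1 hδ.le
      _ = δ := mul_one δ
  · -- bound
    filter_upwards [hδpos] with δ hδ
    intro y
    rw [measureReal_def, hD δ hδ.le]
    have h1 : |mollify k δ (x₀ - y)| ≤ (δ ^ d)⁻¹ * M := by
      rw [mollify, abs_mul, abs_inv, abs_of_nonneg (pow_nonneg hδ.le d)]
      exact mul_le_mul_of_nonneg_left (hM _) (by positivity)
    calc |mollify k δ (x₀ - y)| ≤ (δ ^ d)⁻¹ * M := h1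
      _ = M * c / (δ ^ d * c) := by field_simp

lemma ae_seq_avg {f : E → ℝ} (hf : LocallyIntegrable f volume) :
    ∀ᵐ x ∂(volume : Measure E),
      Tendsto (fun n : ℕ => ⨍ y in closedBall x (((n : ℝ) + 1)⁻¹), ‖f y - f x‖)
        atTop (𝓝 0) := by
  filter_upwards [(Besicovitch.vitaliFamily (volume : Measure E)).ae_tendsto_average_norm_sub hf]
    with x hx
  have h1 : Tendsto (fun n : ℕ => (((n : ℝ) + 1)⁻¹)) atTop (𝓝[>] (0:ℝ)) := by
    rw [tendsto_nhdsWithin_iff]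
    constructor
    · simpa only [one_div] using tendsto_one_div_add_atTop_nhds_zero_nat (𝕜 := ℝ)
    · exact Eventually.of_forall fun n => Set.mem_Ioi.2 (by positivity)
  exact (hx.comp (Besicovitch.tendsto_filterAt volume x)).comp h1

lemma ae_of_forall_ae_restrict {Q : E → Prop}
    (h : ∀ m : ℕ, ∀ᵐ v ∂((volume : Measure E).restrict (closedBall 0 m)), Q v) :
    ∀ᵐ v ∂(volume : Measure E), Q v := by
  rw [ae_iff]
  have hsub : {v : E | ¬ Q v} ⊆ ⋃ m : ℕ, ({v : E | ¬ Q v} ∩ closedBall 0 m) := by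
    intro v hv
    exact mem_iUnion.2 ⟨⌈‖v‖⌉₊, hv, by simp [mem_closedBall_zero_iff, Nat.le_ceil]⟩
  refine measure_mono_null hsub (measure_iUnion_null fun m => ?_)
  have hm := h m
  rw [ae_iff] at hm
  calc volume ({v : E | ¬ Q v} ∩ closedBall 0 m)
      = (volume.restrict (closedBall (0:E) m)) {v : E | ¬ Q v} :=
        (Measure.restrict_apply' measurableSet_closedBall).symm
    _ = 0 := hm

end Aux

section Main
variable {d : ℕ}
local notation "E" => EuclideanSpace ℝ (Fin d)

lemma diag_aux (k : E → ℝ) {M : ℝ} (hM : ∀ z, |k z| ≤ M)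
    (hksupp : support k ⊆ closedBall 0 1)
    (hknorm : ∫ z, k z = 1)
    (w : E × E → ℝ)
    (hw : LocallyIntegrable w (volume : Measure (E × E))) :
    ∀ᵐ p : E × E ∂(volume : Measure (E × E)),
      Tendsto (fun δ : ℝ => ∫ z, w (p.1 - z, p.2 - z) * mollify k δ z)
        (𝓝[>] (0:ℝ)) (𝓝 (w p)) := by
  classical
  have hvol : (volume : Measure (E × E)) = (volume : Measure E).prod volume :=
    Measure.volume_eq_prod E E
  set ν : Measure E := (volume : Measure E) with hν
  -- the sheared function
  set u : E × E → ℝ := fun q => w (q.1, q.1 + q.2) with hu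
  have hψ : MeasurePreserving (fun q : E × E => (q.1, q.1 + q.2)) (ν.prod ν) (ν.prod ν) :=
    measurePreserving_prod_add ν ν
  have hu_aesm : AEStronglyMeasurable u (ν.prod ν) := by
    have h0 := hw.aestronglyMeasurable
    rw [hvol] at h0
    exact h0.comp_quasiMeasurePreserving hψ.quasiMeasurePreserving
  set v : E × E → ℝ := hu_aesm.mk u with hv
  have hvm : StronglyMeasurable v := hu_aesm.stronglyMeasurable_mk
  have huv : u =ᵐ[ν.prod ν] v := hu_aesm.ae_eq_mk
  -- integrability on boxes
  have hbox : ∀ n m : ℕ, IntegrableOn v (closedBall (0:E) n ×ˢ closedBall (0:E) m)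
      (ν.prod ν) := by
    intro n m
    have hKc : IsCompact ((closedBall (0:E) n) ×ˢ (closedBall (0:E) (n + m : ℕ))) :=
      (isCompact_closedBall _ _).prod (isCompact_closedBall _ _)
    have hwK : IntegrableOn w ((closedBall (0:E) n) ×ˢ (closedBall (0:E) (n + m : ℕ)))
        (ν.prod ν) := by
      have h0 := hw.integrableOn_isCompact hKc
      rwa [hvol] at h0
    have hemb : MeasurableEmbedding (fun q : E × E => (q.1, q.1 + q.2)) :=
      (MeasurableEquiv.shearAddRight E).measurableEmbedding
    have hpre : IntegrableOn u
        ((fun q : E × E => (q.1, q.1 + q.2)) ⁻¹'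
          ((closedBall (0:E) n) ×ˢ (closedBall (0:E) (n + m : ℕ)))) (ν.prod ν) :=
      ((hψ.restrict_preimage_emb hemb _).integrable_comp_emb hemb).2 hwK
    have hsubset : (closedBall (0:E) n ×ˢ closedBall (0:E) m) ⊆
        (fun q : E × E => (q.1, q.1 + q.2)) ⁻¹'
          ((closedBall (0:E) n) ×ˢ (closedBall (0:E) (n + m : ℕ))) := by
      rintro ⟨x, y⟩ ⟨hx, hy⟩
      simp only [mem_preimage, mem_prod, mem_closedBall_zero_iff] at *
      refine ⟨hx, ?_⟩
      calc ‖x + y‖ ≤ ‖x‖ + ‖y‖ := norm_add_le _ _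
        _ ≤ (n : ℝ) + m := add_le_add hx hy
        _ = ((n + m : ℕ) : ℝ) := by push_cast; ring
    exact (hpre.mono_set hsubset).congr_fun_ae (ae_restrict_of_ae huv)
  -- slices are locally integrable
  have hslice : ∀ᵐ y ∂ν, LocallyIntegrable (fun x => v (x, y)) ν := by
    have h2 : ∀ n : ℕ, ∀ᵐ y ∂ν, IntegrableOn (fun x => v (x, y)) (closedBall 0 n) ν := by
      intro n
      refine ae_of_forall_ae_restrict fun m => ?_
      have h3 := hbox n m
      rw [IntegrableOn, ← Measure.prod_restrict] at h3
      exact h3.prod_left_ae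
    rw [← ae_all_iff] at h2
    filter_upwards [h2] with y hy
    rw [locallyIntegrable_iff]
    intro K hK
    obtain ⟨R, hR⟩ := hK.isBounded.subset_closedBall 0
    exact (hy ⌈R⌉₊).mono_set (hR.trans (closedBall_subset_closedBall (Nat.le_ceil R)))
  -- jointly measurable averages
  set r : ℕ → ℝ := fun n => ((n : ℝ) + 1)⁻¹ with hr
  set b : ℕ → E × E → ℝ := fun n q =>
    ⨍ y in closedBall q.1 (r n), ‖v (y, q.2) - v q‖ ∂ν with hb
  have hbmeas : ∀ n, Measurable (b n) := by
    intro n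
    have hFm : StronglyMeasurable fun p : (E × E) × E =>
        if p.2 ∈ closedBall p.1.1 (r n) then ‖v (p.2, p.1.2) - v p.1‖ else 0 := by
      refine StronglyMeasurable.ite ?_ ?_ stronglyMeasurable_const
      · exact measurableSet_le (measurable_dist.comp
          (measurable_snd.prodMk (measurable_fst.comp measurable_fst))) measurable_const
      · exact ((hvm.comp_measurable
          (measurable_snd.prodMk (measurable_snd.comp measurable_fst))).sub
          (hvm.comp_measurable measurable_fst)).norm
    have hIm : StronglyMeasurable fun q : E × E =>
        ∫ y, (if y ∈ closedBall q.1 (r n) then ‖v (y, q.2) - v q‖ else 0) ∂ν :=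
      hFm.integral_prod_right'
    have h5 : Measurable fun q : E × E =>
        ∫ y, (if y ∈ closedBall q.1 (r n) then ‖v (y, q.2) - v q‖ else 0) ∂ν :=
      hIm.measurable
    have h6 := h5.const_mul (((ν (closedBall (0:E) (r n))).toReal)⁻¹)
    have heq : b n = fun q : E × E =>
        ((ν (closedBall (0:E) (r n))).toReal)⁻¹ *
          ∫ y, (if y ∈ closedBall q.1 (r n) then ‖v (y, q.2) - v q‖ else 0) ∂ν := by
      funext q
      have h4 : ∫ y, (if y ∈ closedBall q.1 (r n) then ‖v (y, q.2) - v q‖ else 0) ∂ν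
          = ∫ y in closedBall q.1 (r n), ‖v (y, q.2) - v q‖ ∂ν := by
        rw [← integral_indicator measurableSet_closedBall]
        refine integral_congr_ae (Filter.Eventually.of_forall fun y => ?_)
        simp [Set.indicator_apply]
      simp only [hb]
      rw [setAverage_eq, h4, measureReal_def, Measure.addHaar_closedBall_center, smul_eq_mul]
    rw [heq]
    exact h6
  -- the measurable set of convergence
  have hTmeas : MeasurableSet {q : E × E | Tendsto (fun n => b n q) atTop (𝓝 0)} :=
    measurableSet_tendsto (𝓝 (0:ℝ)) hbmeas
  -- slices of T are full
  have hT : ∀ᵐ q ∂(ν.prod ν), Tendsto (fun n => b n q) atTop (𝓝 0) := by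
    rw [Measure.ae_prod_iff_ae_ae hTmeas,
      Measure.ae_ae_comm (by exact hTmeas : MeasurableSet {q : E × E |
        Tendsto (fun n => b n (q.1, q.2)) atTop (𝓝 0)})]
    filter_upwards [hslice] with y hy
    filter_upwards [ae_seq_avg hy] with x hx
    exact hx
  -- pull local integrability of slices back to the product
  have hsnd : Measure.QuasiMeasurePreserving (Prod.snd : E × E → E) (ν.prod ν) ν :=
    Measure.quasiMeasurePreserving_snd
  have hslice' : ∀ᵐ q ∂(ν.prod ν), LocallyIntegrable (fun x => v (x, q.2)) ν :=
    hsnd.tendsto_ae.eventually hslice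
  -- main statement for v
  have hmainv : ∀ᵐ q ∂(ν.prod ν),
      Tendsto (fun δ : ℝ => ∫ z, v (q.1 - z, q.2) * mollify k δ z) (𝓝[>] (0:ℝ))
        (𝓝 (v q)) := by
    filter_upwards [hT, hslice'] with q hq hloc
    have := pointwise_mollify (f := fun x => v (x, q.2)) (x₀ := q.1) hM hksupp hknorm hloc ?_
    · exact this
    · simpa only [hb, hr, Prod.mk.eta] using hq
  -- transfer from v to u
  have hsliceeq : ∀ᵐ y ∂ν, (fun x => u (x, y)) =ᵐ[ν] (fun x => v (x, y)) := by
    have hswap : MeasurePreserving (Prod.swap : E × E → E × E) (ν.prod ν) (ν.prod ν) := by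
      exact Measure.measurePreserving_swap
    have h5 : ∀ᵐ q ∂(ν.prod ν), u q.swap = v q.swap :=
      hswap.quasiMeasurePreserving.tendsto_ae.eventually huv
    have h6 := Measure.ae_ae_of_ae_prod h5
    filter_upwards [h6] with y hy
    exact hy
  have hsliceeq' : ∀ᵐ q ∂(ν.prod ν), (fun x => u (x, q.2)) =ᵐ[ν] (fun x => v (x, q.2)) :=
    hsnd.tendsto_ae.eventually hsliceeq
  have hmainu : ∀ᵐ q ∂(ν.prod ν),
      Tendsto (fun δ : ℝ => ∫ z, u (q.1 - z, q.2) * mollify k δ z) (𝓝[>] (0:ℝ))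
        (𝓝 (u q)) := by
    filter_upwards [hmainv, hsliceeq', huv] with q h1 h2 h3
    rw [show u q = v q from h3]
    refine h1.congr fun δ => ?_
    refine integral_congr_ae ?_
    have hsub : MeasurePreserving (fun z : E => q.1 - z) ν ν :=
      Measure.measurePreserving_sub_left ν q.1
    have h7 : (fun z : E => u (q.1 - z, q.2)) =ᵐ[ν] (fun z : E => v (q.1 - z, q.2)) :=
      hsub.quasiMeasurePreserving.tendsto_ae.eventually h2
    filter_upwards [h7] with z hz
    rw [hz]
  -- transfer to w via the shear (x,y) ↦ (x, y - x)
  have hΦ : MeasurePreserving (fun p : E × E => (p.1, -p.1 + p.2)) (ν.prod ν) (ν.prod ν) :=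
    measurePreserving_prod_neg_add ν ν
  rw [hvol]
  have hfinal := hΦ.quasiMeasurePreserving.tendsto_ae.eventually hmainu
  filter_upwards [hfinal] with p hp
  have e1 : ∀ δ : ℝ, (∫ z, u ((p.1, -p.1 + p.2).1 - z, (p.1, -p.1 + p.2).2) * mollify k δ z)
      = ∫ z, w (p.1 - z, p.2 - z) * mollify k δ z := by
    intro δ
    congr 1
    ext z
    simp only [hu]
    congr 2
    abel
  have e2 : u (p.1, -p.1 + p.2) = w p := by
    simp only [hu]
    rw [show p.1 + (-p.1 + p.2) = p.2 by abel]
  rw [show w p = u (p.1, -p.1 + p.2) from e2.symm]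
  exact hp.congr e1

end Main

/-- **Almost-everywhere convergence of the diagonal mollification.**
For a standard mollifier `k` and a locally integrable `w : ℝ^d × ℝ^d → ℝ`, for
Lebesgue-almost every `(x,y)`, `∫ w(x−z, y−z) k_δ(z) dz → w(x,y)` as `δ → 0⁺`.
(The convolution is only over the `d`-dimensional diagonal direction.) -/
theorem diagonal_mollification_ae_tendsto {d : ℕ}
    (k : EuclideanSpace ℝ (Fin d) → ℝ)
    (hksmooth : ContDiff ℝ (⊤ : ℕ∞) k) (hknonneg : ∀ z, 0 ≤ k z)
    (hksupp : Function.support k ⊆ Metric.closedBall 0 1)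
    (hknorm : ∫ z, k z = 1)
    (w : EuclideanSpace ℝ (Fin d) × EuclideanSpace ℝ (Fin d) → ℝ)
    (hw : LocallyIntegrable w
      (volume : Measure (EuclideanSpace ℝ (Fin d) × EuclideanSpace ℝ (Fin d)))) :
    ∀ᵐ p : EuclideanSpace ℝ (Fin d) × EuclideanSpace ℝ (Fin d)
        ∂(volume : Measure (EuclideanSpace ℝ (Fin d) × EuclideanSpace ℝ (Fin d))),
      Filter.Tendsto (fun δ : ℝ => ∫ z, w (p.1 - z, p.2 - z) * mollify k δ z)
        (nhdsWithin 0 (Set.Ioi 0)) (nhds (w p)) := by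
  obtain ⟨M, hM⟩ : ∃ M, ∀ z, |k z| ≤ M := by
    obtain ⟨M, hM⟩ := hksmooth.continuous.bounded_above_of_compact_support
      (HasCompactSupport.intro (isCompact_closedBall (0:EuclideanSpace ℝ (Fin d)) 1)
        (fun x hx => by_contra fun h => hx (hksupp h)))
    exact ⟨M, fun z => by simpa [Real.norm_eq_abs] using hM z⟩
  exact diag_aux k hM hksupp hknorm w hw
end
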